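/- Let f : ℝⁿ → ℝⁿ be a super-linearizable polynomial vector field and let g : ℝⁿ → ℝᵏ be a polynomial map. Then the polynomial vector field f̃ : ℝ^{n+k} → ℝ^{n+k} defined by f̃(x, w) = (f(x), g(x)) for x ∈ ℝⁿ, w ∈ ℝᵏ is super-linearizable. -/

import Mathlib

open Matrix MvPolynomial

/-- A map between finite-dimensional real coordinate spaces is polynomial if each
component is given by a real multivariate polynomial. -/
def IsPolyMap {n m : ℕ} (f : (Fin n → ℝ) → (Fin m → ℝ)) : Prop :=
  ∃ P : Fin m → MvPolynomial (Fin n) ℝ, ∀ x i, f x i = MvPolynomial.eval x (P i)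

/-- A vector field `f : ℝⁿ → ℝⁿ` is super-linearizable if there are `k ∈ ℕ`, a matrix
`A ∈ ℝ^{(n+k)×(n+k)}` and a polynomial map `p : ℝⁿ → ℝᵏ` such that every solution of
`ẋ = f(x)` starting at `x₀` is, for `t ≥ 0`, the projection on the first `n` coordinates
of `t ↦ exp(tA)·(x₀, p(x₀))`. -/
def IsSuperLinearizable {n : ℕ} (f : (Fin n → ℝ) → (Fin n → ℝ)) : Prop :=
  ∃ (k : ℕ) (A : Matrix (Fin (n + k)) (Fin (n + k)) ℝ)
    (p : (Fin n → ℝ) → (Fin k → ℝ)), IsPolyMap p ∧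
    ∀ (x₀ : Fin n → ℝ) (x : ℝ → (Fin n → ℝ)),
      x 0 = x₀ →
      (∀ t : ℝ, 0 ≤ t → HasDerivAt x (f (x t)) t) →
      ∀ t : ℝ, 0 ≤ t → ∀ i : Fin n,
        (NormedSpace.exp (t • A)).mulVec (Fin.append x₀ (p x₀)) (Fin.castAdd k i) = x t i

/-!
Let `y(t) = exp(tA)·(x₀, p(x₀))` be the linear flow that super-linearizes `f`, so `x = Π y`.
Polynomials of total degree `≤ D` in `y` form a finite-dimensional space preserved by the
derivation `φ ↦ ∑ᵢ (A y)ᵢ ∂ᵢφ`, hence the values `o(t)` of a basis of that space along `y`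
satisfy a linear ODE `o' = M o`. For `D` large, both components of the lifted velocity,
`f(x) = Π A y` and `g(x) = g(Π y)`, are linear in `o`, so `(x, w, o)` solves a linear ODE
`(x, w, o)' = B (x, w, o)` and uniqueness identifies it with `exp(tB)·(x₀, w₀, o(0))`.
-/

namespace Matrix

-- `NormedSpace.exp` does not depend on the norm; this one only serves the analytic lemmas.
attribute [local instance] Matrix.linftyOpNormedRing Matrix.linftyOpNormedAlgebra

variable {ι : Type*} [Fintype ι] [DecidableEq ι]

theorem hasDerivAt_exp_smul_mulVec (B : Matrix ι ι ℝ) (v : ι → ℝ) (t : ℝ) :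
    HasDerivAt (fun s : ℝ => NormedSpace.exp (s • B) *ᵥ v)
      (B *ᵥ (NormedSpace.exp (t • B) *ᵥ v)) t := by
  let L : Matrix ι ι ℝ →L[ℝ] ι → ℝ :=
    LinearMap.toContinuousLinearMap ((mulVecBilin ℝ ℝ).flip v)
  rw [mulVec_mulVec]
  exact L.hasFDerivAt.comp_hasDerivAt t (hasDerivAt_exp_smul_const' B t)

theorem exp_zero_smul_mulVec (B : Matrix ι ι ℝ) (v : ι → ℝ) :
    NormedSpace.exp ((0 : ℝ) • B) *ᵥ v = v := by
  simp [NormedSpace.exp_zero]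

theorem eq_exp_smul_mulVec_of_hasDerivAt (B : Matrix ι ι ℝ) {u : ℝ → ι → ℝ}
    (hu : ∀ t, 0 ≤ t → HasDerivAt u (B *ᵥ u t) t) {t : ℝ} (ht : 0 ≤ t) :
    u t = NormedSpace.exp (t • B) *ᵥ u 0 := by
  have hexp := hasDerivAt_exp_smul_mulVec B (u 0)
  refine ODE_solution_unique (v := fun _ => B.mulVecLin) (a := 0) (b := t)
    (fun _ => (LinearMap.toContinuousLinearMap B.mulVecLin).lipschitz)
    (fun s hs => (hu s hs.1).continuousAt.continuousWithinAt)
    (fun s hs => (hu s hs.1).hasDerivWithinAt)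
    (fun s _ => (hexp s).continuousAt.continuousWithinAt)
    (fun s _ => (hexp s).hasDerivWithinAt) (exp_zero_smul_mulVec B _).symm ⟨ht, le_rfl⟩

theorem submatrix_fromBlocks_mulVec_append {l m n o : ℕ}
    (A : Matrix (Fin l) (Fin n) ℝ) (B : Matrix (Fin l) (Fin o) ℝ)
    (C : Matrix (Fin m) (Fin n) ℝ) (D : Matrix (Fin m) (Fin o) ℝ)
    (x : Fin n → ℝ) (y : Fin o → ℝ) :
    (fromBlocks A B C D).submatrix finSumFinEquiv.symm finSumFinEquiv.symm *ᵥ Fin.append x y =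
      Fin.append (A *ᵥ x + B *ᵥ y) (C *ᵥ x + D *ᵥ y) := by
  have hxy : Fin.append x y ∘ finSumFinEquiv = Sum.elim x y := Fin.append_comp_sumElim
  rw [submatrix_mulVec_equiv, Equiv.symm_symm, hxy, fromBlocks_mulVec]
  ext i
  refine Fin.addCases (fun i => ?_) (fun i => ?_) i <;> simp

end Matrix

theorem HasDerivAt.finAppend {n m : ℕ} {x : ℝ → Fin n → ℝ} {y : ℝ → Fin m → ℝ}
    {x' : Fin n → ℝ} {y' : Fin m → ℝ} {t : ℝ} (hx : HasDerivAt x x' t) (hy : HasDerivAt y y' t) :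
    HasDerivAt (fun s => Fin.append (x s) (y s)) (Fin.append x' y') t := by
  refine hasDerivAt_pi.2 fun i => Fin.addCases (fun i => ?_) (fun i => ?_) i
  · simpa using hasDerivAt_pi.1 hx i
  · simpa using hasDerivAt_pi.1 hy i

theorem HasDerivAt.eq_of_eqOn_Ici {E : Type*} [NormedAddCommGroup E] [NormedSpace ℝ E]
    {u w : ℝ → E} {u' w' : E} {t : ℝ} (hu : HasDerivAt u u' t) (hw : HasDerivAt w w' t)
    (huw : Set.EqOn u w (Set.Ici t)) : u' = w' :=
  (uniqueDiffWithinAt_Ici t).eq_deriv _ hu.hasDerivWithinAt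
    (hw.hasDerivWithinAt.congr huw (huw Set.self_mem_Ici))

namespace MvPolynomial

variable {ι : Type*} [Fintype ι]

theorem hasDerivAt_eval_comp (φ : MvPolynomial ι ℝ) {y : ℝ → ι → ℝ} {y' : ι → ℝ} {t : ℝ}
    (hy : HasDerivAt y y' t) :
    HasDerivAt (fun s => eval (y s) φ) (∑ i, eval (y t) (pderiv i φ) * y' i) t := by
  classical
  induction φ using MvPolynomial.induction_on with
  | C a => simpa using hasDerivAt_const t a
  | add p q hp hq =>
    simp only [map_add, add_mul, Finset.sum_add_distrib]
    exact hp.fun_add hq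
  | mul_X p j hp =>
    simp only [map_mul, eval_X]
    refine (hp.fun_mul (hasDerivAt_pi.1 hy j)).congr_deriv ?_
    simp only [pderiv_mul, pderiv_X, map_add, map_mul, eval_X, add_mul, Finset.sum_add_distrib,
      Pi.single_apply, apply_ite (eval (y t)), map_zero, mul_ite, mul_one, mul_zero,
      ite_mul, zero_mul, Finset.sum_ite_eq, Finset.mem_univ, if_true, Finset.sum_mul]
    congr 1
    exact Finset.sum_congr rfl fun i _ => by ring

noncomputable def linearFieldDeriv (A : Matrix ι ι ℝ) :
    MvPolynomial ι ℝ →ₗ[ℝ] MvPolynomial ι ℝ :=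
  ∑ i, LinearMap.mulRight ℝ (∑ j, C (A i j) * X j) ∘ₗ (pderiv i).toLinearMap

theorem linearFieldDeriv_apply (A : Matrix ι ι ℝ) (φ : MvPolynomial ι ℝ) :
    linearFieldDeriv A φ = ∑ i, pderiv i φ * ∑ j, C (A i j) * X j := by
  simp [linearFieldDeriv]

theorem eval_linearFieldDeriv (A : Matrix ι ι ℝ) (φ : MvPolynomial ι ℝ) (v : ι → ℝ) :
    eval v (linearFieldDeriv A φ) = ∑ i, eval v (pderiv i φ) * (A *ᵥ v) i := by
  simp [linearFieldDeriv_apply, mulVec, dotProduct]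

theorem IsHomogeneous.linearFieldDeriv (A : Matrix ι ι ℝ) {φ : MvPolynomial ι ℝ} {d : ℕ}
    (hφ : φ.IsHomogeneous d) : (linearFieldDeriv A φ).IsHomogeneous d := by
  rw [linearFieldDeriv_apply]
  cases d with
  | zero =>
    rw [totalDegree_eq_zero_iff_eq_C.1 ((totalDegree_zero_iff_isHomogeneous _).2 hφ)]
    simpa using isHomogeneous_zero ι ℝ 0
  | succ d =>
    refine IsHomogeneous.sum _ _ _ fun i _ => (hφ.pderiv).mul ?_
    exact IsHomogeneous.sum _ _ _ fun j _ => (isHomogeneous_C _ _).mul (isHomogeneous_X _ _)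

theorem linearFieldDeriv_mem_restrictTotalDegree (A : Matrix ι ι ℝ) {D : ℕ}
    {φ : MvPolynomial ι ℝ} (hφ : φ ∈ restrictTotalDegree ι ℝ D) :
    linearFieldDeriv A φ ∈ restrictTotalDegree ι ℝ D := by
  rw [mem_restrictTotalDegree] at hφ
  rw [← sum_homogeneousComponent φ, map_sum]
  refine Submodule.sum_mem _ fun d hd => (mem_restrictTotalDegree _ _ _).2 ?_
  exact ((homogeneousComponent_isHomogeneous d φ).linearFieldDeriv A).totalDegree_le.trans
    (by simp at hd; omega)

noncomputable def observableBasis (ι : Type*) [Fintype ι] (D : ℕ) :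
    Module.Basis (Fin (Module.finrank ℝ (restrictTotalDegree ι ℝ D))) ℝ
      (restrictTotalDegree ι ℝ D) :=
  Module.finBasis ℝ _

noncomputable def observables (D : ℕ) (v : ι → ℝ) :
    Fin (Module.finrank ℝ (restrictTotalDegree ι ℝ D)) → ℝ :=
  fun r => eval v (observableBasis ι D r : MvPolynomial ι ℝ)

noncomputable def observableMatrix (A : Matrix ι ι ℝ) (D : ℕ) :
    Matrix (Fin (Module.finrank ℝ (restrictTotalDegree ι ℝ D)))
      (Fin (Module.finrank ℝ (restrictTotalDegree ι ℝ D))) ℝ :=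
  (LinearMap.toMatrix (observableBasis ι D) (observableBasis ι D)
    ((linearFieldDeriv A).restrict fun _ => linearFieldDeriv_mem_restrictTotalDegree A))ᵀ

theorem eval_eq_dotProduct_observables {D : ℕ} (φ : restrictTotalDegree ι ℝ D) (v : ι → ℝ) :
    eval v (φ : MvPolynomial ι ℝ) = (observableBasis ι D).repr φ ⬝ᵥ observables D v := by
  nth_rewrite 1 [← (observableBasis ι D).sum_repr φ]
  simp only [Submodule.coe_sum, Submodule.coe_smul, map_sum, smul_eval, observables, dotProduct]

theorem exists_eval_eq_dotProduct_observables {D : ℕ} {φ : MvPolynomial ι ℝ}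
    (hφ : φ.totalDegree ≤ D) : ∃ c, ∀ v, eval v φ = c ⬝ᵥ observables D v :=
  ⟨_, eval_eq_dotProduct_observables ⟨φ, (mem_restrictTotalDegree _ _ _).2 hφ⟩⟩

theorem hasDerivAt_observables (A : Matrix ι ι ℝ) (D : ℕ) {y : ℝ → ι → ℝ} {t : ℝ}
    (hy : HasDerivAt y (A *ᵥ y t) t) :
    HasDerivAt (fun s => observables D (y s)) (observableMatrix A D *ᵥ observables D (y t)) t := by
  refine hasDerivAt_pi.2 fun r => (hasDerivAt_eval_comp _ hy).congr_deriv ?_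
  rw [← eval_linearFieldDeriv]
  refine (eval_eq_dotProduct_observables
    ((linearFieldDeriv A).restrict (fun _ => linearFieldDeriv_mem_restrictTotalDegree A)
      (observableBasis ι D r)) (y t)).trans ?_
  simp [observableMatrix, mulVec, dotProduct, LinearMap.toMatrix_apply]

end MvPolynomial

theorem IsPolyMap.comp {l m n : ℕ} {f : (Fin m → ℝ) → Fin l → ℝ} {g : (Fin n → ℝ) → Fin m → ℝ}
    (hf : IsPolyMap f) (hg : IsPolyMap g) : IsPolyMap (f ∘ g) := by
  obtain ⟨P, hP⟩ := hf
  obtain ⟨Q, hQ⟩ := hg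
  refine ⟨fun i => bind₁ Q (P i), fun x i => ?_⟩
  rw [Function.comp_apply, hP, show g x = fun j => eval x (Q j) from funext (hQ x)]
  exact (eval₂Hom_bind₁ _ _ _ _).symm

theorem IsPolyMap.append {l m n : ℕ} {f : (Fin n → ℝ) → Fin l → ℝ} {g : (Fin n → ℝ) → Fin m → ℝ}
    (hf : IsPolyMap f) (hg : IsPolyMap g) : IsPolyMap fun x => Fin.append (f x) (g x) := by
  obtain ⟨P, hP⟩ := hf
  obtain ⟨Q, hQ⟩ := hg
  exact ⟨Fin.append P Q, fun x i => Fin.addCases (by simp [hP]) (by simp [hQ]) i⟩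

theorem isPolyMap_comp_castAdd (n k : ℕ) :
    IsPolyMap fun z : Fin (n + k) → ℝ => z ∘ Fin.castAdd k :=
  ⟨fun i => X (Fin.castAdd k i), by simp⟩

theorem isPolyMap_observables {N : ℕ} (D : ℕ) : IsPolyMap (observables (ι := Fin N) D) :=
  ⟨fun r => observableBasis (Fin N) D r, fun _ _ => rfl⟩

theorem isSuperLinearizable_of_linear_observables {d K : ℕ} (F : (Fin d → ℝ) → Fin d → ℝ)
    (M : Matrix (Fin K) (Fin K) ℝ) (E : Matrix (Fin d) (Fin K) ℝ)
    {q : (Fin d → ℝ) → Fin K → ℝ} (hq : IsPolyMap q)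
    (h : ∀ z : ℝ → Fin d → ℝ, (∀ t, 0 ≤ t → HasDerivAt z (F (z t)) t) →
      ∃ o : ℝ → Fin K → ℝ, o 0 = q (z 0) ∧
        ∀ t, 0 ≤ t → HasDerivAt o (M *ᵥ o t) t ∧ F (z t) = E *ᵥ o t) :
    IsSuperLinearizable F := by
  let B : Matrix (Fin (d + K)) (Fin (d + K)) ℝ :=
    (fromBlocks 0 E 0 M).submatrix finSumFinEquiv.symm finSumFinEquiv.symm
  refine ⟨K, B, q, hq, ?_⟩
  rintro _ z rfl hz t ht i
  obtain ⟨o, ho₀, ho⟩ := h z hz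
  have hu : ∀ s, 0 ≤ s → HasDerivAt (fun s => Fin.append (z s) (o s))
      (B *ᵥ Fin.append (z s) (o s)) s := by
    intro s hs
    rw [submatrix_fromBlocks_mulVec_append, ← (ho s hs).2]
    simpa using (hz s hs).finAppend (ho s hs).1
  rw [← ho₀, ← Matrix.eq_exp_smul_mulVec_of_hasDerivAt B hu ht, Fin.append_left]

theorem superlinearizable_lift_general {n k : ℕ}
    (f : (Fin n → ℝ) → (Fin n → ℝ)) (g : (Fin n → ℝ) → (Fin k → ℝ))
    (hfsl : IsSuperLinearizable f) (hgpoly : IsPolyMap g)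
    (F : (Fin (n + k) → ℝ) → (Fin (n + k) → ℝ))
    (hF : ∀ z : Fin (n + k) → ℝ,
      F z = Fin.append (f fun i => z (Fin.castAdd k i)) (g fun i => z (Fin.castAdd k i))) :
    IsSuperLinearizable F := by
  obtain ⟨Q, hQ⟩ := hgpoly
  obtain ⟨m, A, p, hp, hsol⟩ := hfsl
  -- the lifted velocity `(f x, g x)` as polynomials in `y`, where `x = Π y` and `f x = Π (A y)`
  let P : Fin (n + k) → MvPolynomial (Fin (n + m)) ℝ :=
    Fin.append (fun i => ∑ j, C (A (Fin.castAdd m i) j) * X j) fun j =>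
      rename (Fin.castAdd m) (Q j)
  let D := Finset.univ.sup fun r => (P r).totalDegree
  choose E hE using fun r =>
    exists_eval_eq_dotProduct_observables (D := D)
      (Finset.le_sup (f := fun r => (P r).totalDegree) (Finset.mem_univ r))
  have hproj := isPolyMap_comp_castAdd n k
  refine isSuperLinearizable_of_linear_observables F (observableMatrix A D) (Matrix.of E)
    ((isPolyMap_observables D).comp (hproj.append (hp.comp hproj))) fun z hz => ?_
  let x : ℝ → Fin n → ℝ := fun t => z t ∘ Fin.castAdd k
  let y : ℝ → Fin (n + m) → ℝ := fun t => NormedSpace.exp (t • A) *ᵥ Fin.append (x 0) (p (x 0))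
  have hFz t : F (z t) = Fin.append (f (x t)) (g (x t)) := hF (z t)
  have hx : ∀ t, 0 ≤ t → HasDerivAt x (f (x t)) t := fun t ht =>
    hasDerivAt_pi.2 fun i =>
      (hasDerivAt_pi.1 (hz t ht) (Fin.castAdd k i)).congr_deriv (by simp [hFz])
  have hy t : HasDerivAt y (A *ᵥ y t) t := hasDerivAt_exp_smul_mulVec A _ t
  have hxy : ∀ t, 0 ≤ t → y t ∘ Fin.castAdd m = x t := fun t ht => funext (hsol _ x rfl hx t ht)
  refine ⟨fun t => observables D (y t), congrArg (observables D) (exp_zero_smul_mulVec A _),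
    fun t ht => ⟨hasDerivAt_observables A D (hy t), ?_⟩⟩
  have hfx : f (x t) = (A *ᵥ y t) ∘ Fin.castAdd m :=
    (hx t ht).eq_of_eqOn_Ici (hasDerivAt_pi.2 fun i => hasDerivAt_pi.1 (hy t) _)
      fun s hs => (hxy s (ht.trans hs)).symm
  ext r
  refine (?_ : F (z t) r = eval (y t) (P r)).trans (hE r (y t))
  refine Fin.addCases (fun i => ?_) (fun j => ?_) r
  · simp [hFz, P, hfx, mulVec, dotProduct]
  · simp [hFz, P, hQ, eval_rename, hxy t ht]

/-- If `f : ℝⁿ → ℝⁿ` is a super-linearizable polynomial vector field and `g : ℝⁿ → ℝᵏ` is a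
polynomial map, then the vector field `f̃(x, w) = (f(x), g(x))` on `ℝ^{n+k}` is
super-linearizable. -/
theorem superlinearizable_lift {n k : ℕ}
    (f : (Fin n → ℝ) → (Fin n → ℝ)) (g : (Fin n → ℝ) → (Fin k → ℝ))
    (hfpoly : IsPolyMap f) (hfsl : IsSuperLinearizable f) (hgpoly : IsPolyMap g)
    (F : (Fin (n + k) → ℝ) → (Fin (n + k) → ℝ))
    (hF : ∀ z : Fin (n + k) → ℝ,
      F z = Fin.append (f fun i => z (Fin.castAdd k i)) (g fun i => z (Fin.castAdd k i))) :
    IsSuperLinearizable F :=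
  superlinearizable_lift_general f g hfsl hgpoly F hF
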